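/- If the word w1 = w1' · w · w1'' has period p1 and w2 = w2' · w · w2'' has period p2 with the shared factor w of length at least p1 + p2 - gcd(p1,p2), then both w1 and w2 have period gcd(p1,p2). -/

import Mathlib

/-!
Fine–Wilf on the shared factor `w` is proved by Euclid's subtraction: if `w` has periods
`p < q`, then `w` with its last `p` letters removed has periods `p` and `q - p`, whose gcd is
again `gcd p q`. Each step is lifted back along a propagation principle: a word with period
`p` is determined by any window of length `p`, through residues mod `p`; so if a window of
length at least `p` has a period `g ∣ p`, the whole word has period `g`. The same principle
carries period `gcd p1 p2` from `w` to `w1` and `w2`.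
-/

/-- A word `w` has period `p` if letters at distance `p` coincide. -/
def HasPeriod {α : Type*} (w : List α) (p : ℕ) : Prop :=
  ∀ i, i + p < w.length → w[i]? = w[i + p]?

theorem Nat.exists_lt_add_modEq {p : ℕ} (hp : 0 < p) (a i : ℕ) : ∃ k < p, a + k ≡ i [MOD p] := by
  refine ⟨(i + (p - 1) * a) % p, Nat.mod_lt _ hp, ?_⟩
  calc a + (i + (p - 1) * a) % p ≡ a + (i + (p - 1) * a) [MOD p] :=
        (Nat.mod_modEq _ _).add_left a
    _ = i + a * p := by
        obtain ⟨p, rfl⟩ := Nat.exists_eq_add_of_lt hp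
        simp only [Nat.zero_add, Nat.add_sub_cancel]
        ring
    _ ≡ i [MOD p] := Nat.add_mul_mod_self_right i a p

theorem List.getElem?_append_append_length_add {α : Type*} (s w t : List α) {i : ℕ}
    (hi : i < w.length) : (s ++ w ++ t)[s.length + i]? = w[i]? := by
  rw [List.append_assoc, List.getElem?_append_right (by omega), Nat.add_sub_cancel_left,
    List.getElem?_append_left hi]

namespace HasPeriod

variable {α : Type*} {u w : List α} {p q g : ℕ}

theorem mul (h : HasPeriod u p) (k : ℕ) : HasPeriod u (k * p) := by
  induction k with
  | zero => intro i _; simp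
  | succ k ih =>
    intro i hi
    rw [Nat.succ_mul, ← Nat.add_assoc] at hi ⊢
    exact (ih i (by omega)).trans (h _ hi)

theorem getElem?_eq_of_modEq (h : HasPeriod u p) {i j : ℕ} (hij : i ≡ j [MOD p])
    (hi : i < u.length) (hj : j < u.length) : u[i]? = u[j]? := by
  wlog hle : i ≤ j generalizing i j
  · exact (this hij.symm hj hi (by omega)).symm
  obtain ⟨k, hk⟩ := (Nat.modEq_iff_dvd' hle).mp hij
  obtain rfl : j = i + k * p := by rw [Nat.mul_comm] at hk; omega
  exact h.mul k i hj

theorem of_isInfix (h : HasPeriod u p) (hw : w <:+: u) : HasPeriod w p := by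
  obtain ⟨s, t, rfl⟩ := hw
  intro i hi
  rw [← List.getElem?_append_append_length_add s w t (by omega),
    ← List.getElem?_append_append_length_add s w t hi, ← Nat.add_assoc]
  exact h _ (by simp only [List.length_append]; omega)

theorem of_isInfix_of_dvd (hu : HasPeriod u p) (hw : w <:+: u) (hwg : HasPeriod w g)
    (hgp : g ∣ p) (hp : 0 < p) (hpw : p ≤ w.length) : HasPeriod u g := by
  obtain ⟨s, t, rfl⟩ := hw
  intro i hi
  have hlen : (s ++ w ++ t).length = s.length + w.length + t.length := by
    simp only [List.length_append]
  obtain ⟨k, hkp, hk⟩ := Nat.exists_lt_add_modEq hp s.length i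
  obtain ⟨k', hkp', hk'⟩ := Nat.exists_lt_add_modEq hp s.length (i + g)
  have hkk' : k ≡ k' [MOD g] := by
    have h : s.length + k' ≡ s.length + k + g [MOD g] :=
      (hk'.trans (hk.add_right g).symm).of_dvd hgp
    rw [Nat.add_assoc] at h
    exact ((Nat.ModEq.add_left_cancel' _ h).trans (Nat.add_modEq_right)).symm
  calc (s ++ w ++ t)[i]? = (s ++ w ++ t)[s.length + k]? :=
        hu.getElem?_eq_of_modEq hk.symm (by omega) (by omega)
    _ = w[k]? := List.getElem?_append_append_length_add s w t (by omega)
    _ = w[k']? := hwg.getElem?_eq_of_modEq hkk' (by omega) (by omega)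
    _ = (s ++ w ++ t)[s.length + k']? :=
        (List.getElem?_append_append_length_add s w t (by omega)).symm
    _ = (s ++ w ++ t)[i + g]? := hu.getElem?_eq_of_modEq hk' (by omega) hi

theorem take_length_sub (hp : HasPeriod w p) (hq : HasPeriod w q) (hpq : p ≤ q) :
    HasPeriod (w.take (w.length - p)) (q - p) := by
  intro i hi
  simp only [List.length_take] at hi
  rw [List.getElem?_take_of_lt (by omega), List.getElem?_take_of_lt (by omega)]
  calc w[i]? = w[i + q]? := hq i (by omega)
    _ = w[i + (q - p) + p]? := by rw [show i + (q - p) + p = i + q by omega]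
    _ = w[i + (q - p)]? := (hp _ (by omega)).symm

theorem gcd (hp : HasPeriod w p) (hq : HasPeriod w q) (hlen : p + q - p.gcd q ≤ w.length) :
    HasPeriod w (p.gcd q) := by
  induction hn : p + q using Nat.strong_induction_on generalizing p q w with
  | _ n ih =>
  wlog hpq : p ≤ q generalizing p q
  · rw [Nat.gcd_comm] at hlen ⊢
    exact this hq hp (by omega) (by omega) (by omega)
  rcases Nat.eq_zero_or_pos p with rfl | hp0
  · simpa using hq
  rcases hpq.eq_or_lt with rfl | hlt
  · simpa using hp
  have hg : (q - p).gcd p = p.gcd q := by rw [Nat.gcd_sub_self_left hpq, Nat.gcd_comm]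
  have hgq : p.gcd q ≤ q - p := Nat.le_of_dvd (by omega) (hg ▸ Nat.gcd_dvd_left _ _)
  have htake : HasPeriod (w.take (w.length - p)) (p.gcd q) := by
    rw [← hg]
    refine ih q (by omega) (hp.take_length_sub hq hpq)
      (hp.of_isInfix (List.take_prefix _ _).isInfix) ?_ (by omega)
    rw [hg, List.length_take]
    omega
  exact hp.of_isInfix_of_dvd (List.take_prefix _ _).isInfix htake (Nat.gcd_dvd_left p q) hp0
    (by rw [List.length_take]; omega)

end HasPeriod

/-- If `w1 = w1' · w · w1''` has period `p1`, `w2 = w2' · w · w2''` has period `p2`,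
and the shared factor `w` has length at least `p1 + p2 - gcd(p1,p2)`,
then both `w1` and `w2` have period `gcd(p1,p2)`. -/
theorem fine_wilf_shared_factor {α : Type*} (w1' w w1'' w2' w2'' : List α) (p1 p2 : ℕ)
    (hp1 : 1 ≤ p1) (hp2 : 1 ≤ p2)
    (h1 : HasPeriod (w1' ++ w ++ w1'') p1)
    (h2 : HasPeriod (w2' ++ w ++ w2'') p2)
    (hlen : p1 + p2 - Nat.gcd p1 p2 ≤ w.length) :
    HasPeriod (w1' ++ w ++ w1'') (Nat.gcd p1 p2) ∧
    HasPeriod (w2' ++ w ++ w2'') (Nat.gcd p1 p2) := by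
  have hw1 : w <:+: w1' ++ w ++ w1'' := List.infix_append _ _ _
  have hw2 : w <:+: w2' ++ w ++ w2'' := List.infix_append _ _ _
  have hwg : HasPeriod w (Nat.gcd p1 p2) := (h1.of_isInfix hw1).gcd (h2.of_isInfix hw2) hlen
  have hg1 : Nat.gcd p1 p2 ≤ p1 := Nat.gcd_le_left _ hp1
  have hg2 : Nat.gcd p1 p2 ≤ p2 := Nat.gcd_le_right _ hp2
  exact ⟨h1.of_isInfix_of_dvd hw1 hwg (Nat.gcd_dvd_left _ _) hp1 (by omega),
    h2.of_isInfix_of_dvd hw2 hwg (Nat.gcd_dvd_right _ _) hp2 (by omega)⟩
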